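/- Let (A, μ, α) be a Hom-supercommutative algebra and D : A → A an even derivation with Dα = αD. Then A with the product x * y = x·D(y) and the same twisting map α is a Hom-Novikov superalgebra. -/
import Mathlib


/-- The product `x * y = x · D(y)`. -/
def dprod {𝕜 A : Type*} [Field 𝕜] [AddCommGroup A] [Module 𝕜 A]
    (mul : A →ₗ[𝕜] A →ₗ[𝕜] A) (D : A →ₗ[𝕜] A) (x y : A) : A :=
  mul x (D y)

theorem stmt3
    (𝕜 A : Type*) [Field 𝕜] [AddCommGroup A] [Module 𝕜 A]
    (G : ZMod 2 → Submodule 𝕜 A) (hG : DirectSum.IsInternal G)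
    (mul : A →ₗ[𝕜] A →ₗ[𝕜] A) (α : A →ₗ[𝕜] A)
    (hmul_even : ∀ i j : ZMod 2, ∀ x ∈ G i, ∀ y ∈ G j, mul x y ∈ G (i + j))
    (hα_even : ∀ i : ZMod 2, ∀ x ∈ G i, α x ∈ G i)
    (hα_mul : ∀ x y : A, α (mul x y) = mul (α x) (α y))
    (hassoc : ∀ x y z : A, mul (mul x y) (α z) = mul (α x) (mul y z))
    (hcomm : ∀ i j : ZMod 2, ∀ x ∈ G i, ∀ y ∈ G j,
      mul x y = ((-1 : 𝕜) ^ (i.val * j.val)) • mul y x)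
    (D : A →ₗ[𝕜] A)
    (hD_even : ∀ i : ZMod 2, ∀ x ∈ G i, D x ∈ G i)
    (hD : ∀ x y : A, D (mul x y) = mul (D x) y + mul x (D y))
    (hDα : ∀ x : A, D (α x) = α (D x)) :
    (∀ i j : ZMod 2, ∀ x ∈ G i, ∀ y ∈ G j, dprod mul D x y ∈ G (i + j)) ∧
    (∀ x y : A, α (dprod mul D x y) = dprod mul D (α x) (α y)) ∧
    (∀ i j k : ZMod 2, ∀ x ∈ G i, ∀ y ∈ G j, ∀ z ∈ G k,
      dprod mul D (dprod mul D x y) (α z) - dprod mul D (α x) (dprod mul D y z)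
        = ((-1 : 𝕜) ^ (i.val * j.val)) •
            (dprod mul D (dprod mul D y x) (α z)
              - dprod mul D (α y) (dprod mul D x z))) ∧
    (∀ i j k : ZMod 2, ∀ x ∈ G i, ∀ y ∈ G j, ∀ z ∈ G k,
      dprod mul D (dprod mul D x y) (α z)
        = ((-1 : 𝕜) ^ (j.val * k.val)) • dprod mul D (dprod mul D x z) (α y)) := by
  refine ⟨?_, ?_, ?_, ?_⟩
  · intro i j x hx y hy
    exact hmul_even i j x hx (D y) (hD_even j y hy)
  · intro x y
    simp [dprod, hα_mul, hDα]
  · intro i j k x hx y hy z hz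
    have e : dprod mul D (dprod mul D x y) (α z) - dprod mul D (α x) (dprod mul D y z)
        = - mul (mul x y) (α (D (D z))) := by
      simp only [dprod, hDα, hD, map_add]
      rw [hassoc x (D y) (D z), hassoc x y (D (D z))]
      abel
    have e' : dprod mul D (dprod mul D y x) (α z) - dprod mul D (α y) (dprod mul D x z)
        = - mul (mul y x) (α (D (D z))) := by
      simp only [dprod, hDα, hD, map_add]
      rw [hassoc y (D x) (D z), hassoc y x (D (D z))]
      abel
    rw [e, e', hcomm i j x hx y hy]; simp

  · intro i j k x hx y hy z hz
    simp only [dprod, hDα]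
    rw [hassoc x (D y) (D z), hassoc x (D z) (D y),
      hcomm j k (D y) (hD_even j y hy) (D z) (hD_even k z hz), map_smul]
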